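/- Characterization of the cubic-regularized step size: let E be a finite-dimensional real inner product space, H : E → E a symmetric positive semidefinite linear map, g ∈ E with g ≠ 0, η ≥ 0 and L > 0. Consider the function φ(α) := −½⟨(H + (α + η)I)⁻¹ g, g⟩ − 2α³/(3L²) for α > 0 (note H + (α + η)I is positive definite, hence invertible, for every α > 0). Then φ attains a unique global maximum over (0, ∞) at a point α* > 0, and α* is characterized by the fixed-point equation α* = (L/2)·‖(H + (α* + η)I)⁻¹ g‖. -/

import Mathlib

/-!
With `R t = (H + t I)⁻¹` one has `d/dt R t = -(R t)²`, and since `R t` is symmetric,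
`φ' α = ½‖R (α + η) g‖² - 2α²/L² = (2/L²) (q α² - α²)` for `q α = (L/2) ‖R (α + η) g‖`.
By the resolvent identity `R s g - R t g = (t - s) R s (R t g)` and coercivity of `H + s I`,
`q` is strictly decreasing; being positive, it crosses the diagonal exactly once,
at `α*`, and `φ` increases on `(0, α*]` and decreases on `[α*, ∞)`.
-/

open scoped RealInnerProductSpace Ring
open Set

section Resolvent

variable {𝕜 A : Type*} [NontriviallyNormedField 𝕜] [NormedRing A] [NormedAlgebra 𝕜 A]
  [CompleteSpace A]

theorem hasDerivAt_ringInverse_add_smul_one (a : A) {c : 𝕜} (h : IsUnit (a + c • 1)) :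
    HasDerivAt (fun t : 𝕜 => (a + t • 1)⁻¹ʳ) (-((a + c • 1)⁻¹ʳ * (a + c • 1)⁻¹ʳ)) c := by
  obtain ⟨u, hu⟩ := h
  have hlin : HasDerivAt (fun t : 𝕜 => a + t • (1 : A)) 1 c := by
    simpa using ((hasDerivAt_id c).smul_const (1 : A)).const_add a
  have hinv := hasFDerivAt_ringInverse (𝕜 := 𝕜) u
  rw [hu] at hinv
  refine (hinv.comp_hasDerivAt c hlin).congr_deriv ?_
  simp [← hu]

end Resolvent

namespace ContinuousLinearMap

section
variable {R M : Type*} [Semiring R] [TopologicalSpace M] [AddCommMonoid M] [Module R M]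
  [ContinuousAdd M]

theorem apply_ringInverse_apply {f : M →L[R] M} (hf : IsUnit f) (v : M) : f (f⁻¹ʳ v) = v :=
  congr($(Ring.mul_inverse_cancel f hf) v)

theorem ringInverse_apply_ne_zero {f : M →L[R] M} (hf : IsUnit f) {v : M} (hv : v ≠ 0) :
    f⁻¹ʳ v ≠ 0 := fun h => hv (by rw [← apply_ringInverse_apply hf v, h, map_zero])
end

variable {E : Type*} [NormedAddCommGroup E] [InnerProductSpace ℝ E] {T : E →L[ℝ] E}

theorem inner_add_smul_one_apply_self (T : E →L[ℝ] E) (c : ℝ) (u : E) :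
    ⟪(T + c • 1) u, u⟫ = ⟪T u, u⟫ + c * ‖u‖ ^ 2 := by
  simp [inner_add_left, real_inner_smul_left]

theorem isUnit_add_smul_one [CompleteSpace E] (hT : ∀ u, 0 ≤ ⟪T u, u⟫) {c : ℝ} (hc : 0 < c) :
    IsUnit (T + c • 1) :=
  isUnit_of_forall_le_norm_inner_map _ (c := ⟨c, hc.le⟩) hc fun u => by
    show ‖u‖ ^ 2 * c ≤ |⟪(T + c • 1) u, u⟫|
    rw [inner_add_smul_one_apply_self]
    exact le_abs.2 (Or.inl (by linarith [hT u]))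

theorem norm_lt_norm_of_add_smul_one_apply_eq (hT : ∀ u, 0 ≤ ⟪T u, u⟫) {s t : ℝ} (hs : 0 < s)
    (hst : s < t) {u v : E} (hu : u ≠ 0) (h : (T + s • 1) v = (T + t • 1) u) : ‖u‖ < ‖v‖ := by
  have hw : (T + s • 1) (v - u) = (t - s) • u := by
    rw [map_sub, h]
    simp only [add_apply, smul_apply, one_apply_eq_self]
    module
  have hw0 : v - u ≠ 0 := by
    rintro h0
    rw [h0, map_zero] at hw
    exact smul_ne_zero (sub_ne_zero.2 hst.ne') hu hw.symm
  have hcoer : s * ‖v - u‖ ^ 2 ≤ (t - s) * ⟪u, v - u⟫ := by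
    rw [← real_inner_smul_left, ← hw, inner_add_smul_one_apply_self]
    linarith [hT (v - u)]
  have hinner : ‖u‖ ^ 2 < ⟪u, v⟫ := by
    have : 0 < (t - s) * ⟪u, v - u⟫ :=
      lt_of_lt_of_le (by have := norm_pos_iff.2 hw0; positivity) hcoer
    rw [inner_sub_right, real_inner_self_eq_norm_sq] at this
    nlinarith
  nlinarith [real_inner_le_norm u v, norm_nonneg u, norm_nonneg v]

variable [CompleteSpace E]

theorem strictAntiOn_norm_ringInverse_add_smul_one_apply (hT : ∀ u, 0 ≤ ⟪T u, u⟫) {g : E}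
    (hg : g ≠ 0) : StrictAntiOn (fun t : ℝ => ‖(T + t • 1)⁻¹ʳ g‖) (Ioi 0) := by
  intro s hs t ht hst
  have ht_unit := isUnit_add_smul_one hT (show 0 < t from ht)
  refine norm_lt_norm_of_add_smul_one_apply_eq hT hs hst (ringInverse_apply_ne_zero ht_unit hg) ?_
  rw [apply_ringInverse_apply ht_unit, apply_ringInverse_apply (isUnit_add_smul_one hT hs)]

theorem hasDerivAt_inner_ringInverse_add_smul_one_apply (hsym : ∀ u v, ⟪T u, v⟫ = ⟪u, T v⟫)
    (hT : ∀ u, 0 ≤ ⟪T u, u⟫) (g : E) {c : ℝ} (hc : 0 < c) :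
    HasDerivAt (fun t : ℝ => ⟪(T + t • 1)⁻¹ʳ g, g⟫) (-‖(T + c • 1)⁻¹ʳ g‖ ^ 2) c := by
  have hunit := isUnit_add_smul_one hT hc
  have hR := ((hasDerivAt_ringInverse_add_smul_one T hunit).clm_apply
    (hasDerivAt_const c g)).inner ℝ (hasDerivAt_const c g)
  refine hR.congr_deriv ?_
  set A := T + c • 1
  have hA : ∀ x y, ⟪x, A y⟫ = ⟪A x, y⟫ := fun x y => by
    simp [A, inner_add_left, inner_add_right, real_inner_smul_left, real_inner_smul_right, hsym]
  have hsymm : ⟪A⁻¹ʳ (A⁻¹ʳ g), g⟫ = ‖A⁻¹ʳ g‖ ^ 2 := calc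
    ⟪A⁻¹ʳ (A⁻¹ʳ g), g⟫ = ⟪A⁻¹ʳ (A⁻¹ʳ g), A (A⁻¹ʳ g)⟫ := by rw [apply_ringInverse_apply hunit]
    _ = ‖A⁻¹ʳ g‖ ^ 2 := by rw [hA, apply_ringInverse_apply hunit, real_inner_self_eq_norm_sq]
  simp [hsymm]

end ContinuousLinearMap

theorem exists_pos_apply_eq_self_of_antitoneOn {q : ℝ → ℝ} (hanti : AntitoneOn q (Ioi 0))
    (hcont : ContinuousOn q (Ioi 0)) (h1 : 0 < q 1) : ∃ a, 0 < a ∧ q a = a := by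
  set a₀ := min 1 (q 1 / 2)
  set a₁ := max 1 (q 1) + 1
  have ha₀ : 0 < a₀ := lt_min one_pos (half_pos h1)
  have ha₀1 : a₀ ≤ 1 := min_le_left _ _
  have h1a₁ : 1 ≤ a₁ := by linarith [le_max_left 1 (q 1)]
  have hq₀ : a₀ ≤ q a₀ := by
    linarith [min_le_right 1 (q 1 / 2), hanti ha₀ (mem_Ioi.2 one_pos) ha₀1]
  have hq₁ : q a₁ ≤ a₁ := by
    linarith [le_max_right 1 (q 1), hanti (mem_Ioi.2 one_pos) (zero_lt_one.trans_le h1a₁) h1a₁]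
  have hsub : ContinuousOn (fun x => q x - x) (Icc a₀ a₁) :=
    (hcont.mono fun x hx => ha₀.trans_le hx.1).sub continuousOn_id
  obtain ⟨a, ha, hqa⟩ := intermediate_value_Icc' (ha₀1.trans h1a₁) hsub
    ⟨sub_nonpos.2 hq₁, sub_nonneg.2 hq₀⟩
  exact ⟨a, ha₀.trans_le ha.1, sub_eq_zero.1 hqa⟩

theorem apply_lt_apply_of_hasDerivAt_pos_of_neg {φ φ' : ℝ → ℝ} {a x : ℝ} (ha : 0 < a)
    (hφ : ∀ x, 0 < x → HasDerivAt φ (φ' x) x) (hpos : ∀ x ∈ Ioo 0 a, 0 < φ' x)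
    (hneg : ∀ x ∈ Ioi a, φ' x < 0) (hx : 0 < x) (hxa : x ≠ a) : φ x < φ a := by
  have hcont : ∀ s ⊆ Ioi 0, ContinuousOn φ s := fun s hs y hy =>
    (hφ y (hs hy)).continuousAt.continuousWithinAt
  rcases hxa.lt_or_gt with hlt | hgt
  · refine strictMonoOn_of_deriv_pos (convex_Ioc 0 a) (hcont _ Ioc_subset_Ioi_self)
      (fun y hy => ?_) ⟨hx, hlt.le⟩ ⟨ha, le_rfl⟩ hlt
    rw [interior_Ioc] at hy
    exact (hφ y hy.1).deriv ▸ hpos y hy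
  · refine strictAntiOn_of_deriv_neg (convex_Ici a)
      (hcont _ fun y hy => ha.trans_le hy) (fun y hy => ?_) (mem_Ici.2 le_rfl) hgt.le hgt
    rw [interior_Ici] at hy
    exact (hφ y (ha.trans hy)).deriv ▸ hneg y hy

theorem apply_lt_apply_of_hasDerivAt_mul_sq_sub_sq {φ q : ℝ → ℝ} {c a x : ℝ} (hc : 0 < c)
    (hq : StrictAntiOn q (Ioi 0)) (hq₀ : ∀ x, 0 ≤ q x) (ha : 0 < a) (hqa : q a = a)
    (hφ : ∀ x, 0 < x → HasDerivAt φ (c * (q x ^ 2 - x ^ 2)) x) (hx : 0 < x) (hxa : x ≠ a) :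
    φ x < φ a := by
  refine apply_lt_apply_of_hasDerivAt_pos_of_neg ha hφ (fun y hy => ?_) (fun y hy => ?_) hx hxa
  · have : a < q y := hqa ▸ hq hy.1 ha hy.2
    exact mul_pos hc (by nlinarith [hy.1, hy.2])
  · have : q y < a := hqa ▸ hq ha (ha.trans hy) hy
    exact mul_neg_of_pos_of_neg hc (by nlinarith [hq₀ y, mem_Ioi.1 hy])

open ContinuousLinearMap in
theorem cubic_step_size_characterization
    {E : Type*} [NormedAddCommGroup E] [InnerProductSpace ℝ E] [FiniteDimensional ℝ E]
    (H : E →L[ℝ] E)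
    (hsym : ∀ u v, ⟪H u, v⟫ = ⟪u, H v⟫) (hpsd : ∀ u, 0 ≤ ⟪H u, u⟫)
    (g : E) (hg : g ≠ 0) (η : ℝ) (hη : 0 ≤ η) (L : ℝ) (hL : 0 < L)
    (φ : ℝ → ℝ)
    (hφ : ∀ α : ℝ, φ α =
      -(1 / 2) * ⟪Ring.inverse (H + (α + η) • (1 : E →L[ℝ] E)) g, g⟫
        - 2 * α ^ 3 / (3 * L ^ 2)) :
    (∀ α : ℝ, 0 < α → IsUnit (H + (α + η) • (1 : E →L[ℝ] E))) ∧
    ∃ αs : ℝ, 0 < αs ∧ (∀ α : ℝ, 0 < α → φ α ≤ φ αs) ∧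
      (∀ α' : ℝ, 0 < α' → (∀ α : ℝ, 0 < α → φ α ≤ φ α') → α' = αs) ∧
      αs = L / 2 * ‖Ring.inverse (H + (αs + η) • (1 : E →L[ℝ] E)) g‖ := by
  have hshift : ∀ α : ℝ, 0 < α → 0 < α + η := fun α hα => by linarith
  have hunit : ∀ α : ℝ, 0 < α → IsUnit (H + (α + η) • (1 : E →L[ℝ] E)) :=
    fun α hα => isUnit_add_smul_one hpsd (hshift α hα)
  set q : ℝ → ℝ := fun α => L / 2 * ‖(H + (α + η) • (1 : E →L[ℝ] E))⁻¹ʳ g‖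
  have hq_anti : StrictAntiOn q (Ioi 0) := fun s hs t ht hst =>
    mul_lt_mul_of_pos_left (strictAntiOn_norm_ringInverse_add_smul_one_apply hpsd hg
      (hshift s hs) (hshift t ht) (by linarith)) (half_pos hL)
  have hq_cont : ContinuousOn q (Ioi 0) := fun α hα =>
    (((hasDerivAt_ringInverse_add_smul_one H (hunit α hα)).continuousAt.comp_of_eq
      (continuous_add_const η).continuousAt rfl).clm_apply continuousAt_const).norm.const_mul _
      |>.continuousWithinAt
  have hq_one : 0 < q 1 :=
    mul_pos (half_pos hL) (norm_pos_iff.2 (ringInverse_apply_ne_zero (hunit 1 one_pos) hg))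
  obtain ⟨αs, hαs, hfix⟩ := exists_pos_apply_eq_self_of_antitoneOn hq_anti.antitoneOn hq_cont hq_one
  have hderiv : ∀ α, 0 < α → HasDerivAt φ (2 / L ^ 2 * (q α ^ 2 - α ^ 2)) α := fun α hα => by
    have hinner := (hasDerivAt_inner_ringInverse_add_smul_one_apply hsym hpsd g
      (hshift α hα)).comp_add_const α η
    rw [funext hφ]
    refine ((hinner.const_mul _).sub (((hasDerivAt_pow 3 α).const_mul 2).div_const _)).congr_deriv ?_
    field_simp
    ring
  have hmax : ∀ α, 0 < α → α ≠ αs → φ α < φ αs := fun α hα hne =>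
    apply_lt_apply_of_hasDerivAt_mul_sq_sub_sq (by positivity) hq_anti (fun _ => by positivity)
      hαs hfix hderiv hα hne
  refine ⟨hunit, αs, hαs, fun α hα => ?_, fun α' hα' hα'max => ?_, hfix.symm⟩
  · rcases eq_or_ne α αs with rfl | hne
    exacts [le_rfl, (hmax α hα hne).le]
  · by_contra hne
    exact (hmax α' hα' hne).not_ge (hα'max αs hαs)
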